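/- Suppose for each iteration t ≥ 0 and every λ in ℝⁿ and ω in ℝᵐ: Φ(λᵗ⁺¹) − Φ(λ) ≤ ‖λ − λᵗ‖²_M − ‖λ − λᵗ⁺¹‖²_M + ‖ω − ωᵗ‖²_N − ‖ω − ωᵗ⁺¹‖²_N + (ωᵗ⁺¹)ᵀZλ − ωᵀZλᵗ⁺¹, where M, N are symmetric positive semidefinite and Φ is convex with Zλ* = 0 for a minimizer λ* satisfying Φ(λ) − Φ(λ*) + (ω*)ᵀZλ ≥ 0 for all λ. Then with λ̄^{T+1} = (1/(T+1))∑_{t=0}^{T} λᵗ⁺¹: (T+1)·( Φ(λ̄^{T+1}) − Φ(λ*) + 2‖ω*‖·‖Zλ̄^{T+1}‖ ) ≤ ‖2‖ω*‖·e − ω⁰‖²_N + ‖λ* − λ⁰‖²_M, where e = Zλ̄^{T+1}/‖Zλ̄^{T+1}‖ (assuming Zλ̄^{T+1} ≠ 0). -/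

import Mathlib

open Set Matrix Finset

/-- Weighted squared seminorm `uᵀXu`. -/
noncomputable def wsq {n : ℕ} (X : Matrix (Fin n) (Fin n) ℝ) (u : Fin n → ℝ) : ℝ :=
  u ⬝ᵥ X.mulVec u

/-- Euclidean norm of a vector in `ℝⁿ`. -/
noncomputable def enorm' {n : ℕ} (u : Fin n → ℝ) : ℝ := Real.sqrt (u ⬝ᵥ u)

/-!
Evaluate the per-iteration inequality at `λ = λ*` and `ω = 2‖ω*‖e`. Since `Zλ* = 0` the
coupling term `(ωᵗ⁺¹)ᵀZλ*` vanishes, the weighted distances telescope (the final ones are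
dropped, being nonnegative), Jensen's inequality bounds `(T+1)Φ(λ̄)` by `∑ Φ(λᵗ⁺¹)`, and the
remaining linear terms add up to `(T+1)·2‖ω*‖·eᵀZλ̄ = (T+1)·2‖ω*‖·‖Zλ̄‖`.
-/

theorem Finset.sum_range_le_sub_of_le_sub_succ {α : Type*} [AddCommGroup α] [PartialOrder α]
    [IsOrderedAddMonoid α] {a f : ℕ → α} (h : ∀ t, a t ≤ f t - f (t + 1)) (k : ℕ) :
    ∑ t ∈ range k, a t ≤ f 0 - f k :=
  (sum_le_sum fun t _ => h t).trans_eq (sum_range_sub' f k)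

theorem ConvexOn.card_mul_map_average_le {ι E : Type*} [AddCommGroup E] [Module ℝ E]
    {s : Set E} {f : E → ℝ} (hf : ConvexOn ℝ s f) {t : Finset ι} (ht : t.Nonempty)
    {p : ι → E} (hp : ∀ i ∈ t, p i ∈ s) :
    (#t : ℝ) * f ((#t : ℝ)⁻¹ • ∑ i ∈ t, p i) ≤ ∑ i ∈ t, f (p i) := by
  have hcard : (0 : ℝ) < #t := by exact_mod_cast ht.card_pos
  have h := hf.map_centerMass_le (w := fun _ => (1 : ℝ)) (fun _ _ => zero_le_one)
    (by simpa using hcard) hp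
  simp only [centerMass, sum_const, nsmul_eq_mul, mul_one, one_smul, one_mul, Function.comp_apply,
    smul_eq_mul] at h
  rwa [← le_inv_mul_iff₀ hcard]

theorem wsq_nonneg {n : ℕ} {X : Matrix (Fin n) (Fin n) ℝ} (hX : X.PosSemidef)
    (u : Fin n → ℝ) : 0 ≤ wsq X u := by
  simpa [wsq] using hX.dotProduct_mulVec_nonneg u

theorem inv_enorm'_smul_dotProduct_self {m : ℕ} (v : Fin m → ℝ) :
    ((enorm' v)⁻¹ • v) ⬝ᵥ v = enorm' v := by
  have hsq : v ⬝ᵥ v = enorm' v ^ 2 :=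
    (Real.sq_sqrt (Finset.sum_nonneg fun i _ => mul_self_nonneg (v i))).symm
  rw [smul_dotProduct, hsq, smul_eq_mul]
  rcases eq_or_ne (enorm' v) 0 with h | h
  · simp [h]
  · field_simp

theorem card_mul_ergodic_gap_le {n m : ℕ} {Mm : Matrix (Fin n) (Fin n) ℝ} (hM : Mm.PosSemidef)
    {Nn : Matrix (Fin m) (Fin m) ℝ} (hN : Nn.PosSemidef)
    {Φ : (Fin n → ℝ) → ℝ} (hΦ : ConvexOn ℝ univ Φ) {Z : Matrix (Fin m) (Fin n) ℝ}
    {lam : ℕ → Fin n → ℝ} {om : ℕ → Fin m → ℝ} {l : Fin n → ℝ} {w : Fin m → ℝ}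
    (hiter : ∀ t : ℕ,
      Φ (lam (t + 1)) - Φ l ≤
        wsq Mm (l - lam t) - wsq Mm (l - lam (t + 1))
        + wsq Nn (w - om t) - wsq Nn (w - om (t + 1))
        + om (t + 1) ⬝ᵥ Z.mulVec l - w ⬝ᵥ Z.mulVec (lam (t + 1)))
    (hl : Z *ᵥ l = 0) {T : ℕ} {lambar : Fin n → ℝ}
    (hbar : lambar = ((T + 1 : ℝ))⁻¹ • ∑ t ∈ range (T + 1), lam (t + 1)) :
    (T + 1 : ℝ) * (Φ lambar - Φ l + w ⬝ᵥ Z *ᵥ lambar) ≤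
      wsq Nn (w - om 0) + wsq Mm (l - lam 0) := by
  set V : ℕ → ℝ := fun t => wsq Mm (l - lam t) + wsq Nn (w - om t)
  have hstep (t : ℕ) : Φ (lam (t + 1)) - Φ l + w ⬝ᵥ Z *ᵥ lam (t + 1) ≤ V t - V (t + 1) := by
    have := hiter t
    rw [hl, dotProduct_zero] at this
    simp only [V]
    linarith
  have htel := sum_range_le_sub_of_le_sub_succ hstep (T + 1)
  have hT : (T + 1 : ℝ) ≠ 0 := by positivity
  have hJensen : (T + 1 : ℝ) * Φ lambar ≤ ∑ t ∈ range (T + 1), Φ (lam (t + 1)) := by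
    simpa [hbar] using hΦ.card_mul_map_average_le nonempty_range_add_one
      (p := fun t => lam (t + 1)) fun _ _ => mem_univ _
  have hlin :
      (T + 1 : ℝ) * (w ⬝ᵥ Z *ᵥ lambar) = ∑ t ∈ range (T + 1), w ⬝ᵥ Z *ᵥ lam (t + 1) := by
    rw [hbar, mulVec_smul, dotProduct_smul, smul_eq_mul, ← mul_assoc, mul_inv_cancel₀ hT,
      one_mul, mulVec_sum, dotProduct_sum]
  have hV : 0 ≤ V (T + 1) := add_nonneg (wsq_nonneg hM _) (wsq_nonneg hN _)
  rw [sum_add_distrib, sum_sub_distrib, sum_const, card_range, nsmul_eq_mul] at htel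
  push_cast at htel
  linarith

theorem stmt_18_general {n m : ℕ}
    (Mm : Matrix (Fin n) (Fin n) ℝ) (hM : Mm.PosSemidef)
    (Nn : Matrix (Fin m) (Fin m) ℝ) (hN : Nn.PosSemidef)
    (Φ : (Fin n → ℝ) → ℝ) (hΦ : ConvexOn ℝ univ Φ)
    (Z : Matrix (Fin m) (Fin n) ℝ)
    (lam : ℕ → Fin n → ℝ) (om : ℕ → Fin m → ℝ)
    (lamstar : Fin n → ℝ) (omstar : Fin m → ℝ)
    (hZstar : Z.mulVec lamstar = 0)
    (hiter : ∀ (t : ℕ) (l : Fin n → ℝ) (w : Fin m → ℝ),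
      Φ (lam (t + 1)) - Φ l ≤
        wsq Mm (l - lam t) - wsq Mm (l - lam (t + 1))
        + wsq Nn (w - om t) - wsq Nn (w - om (t + 1))
        + om (t + 1) ⬝ᵥ Z.mulVec l - w ⬝ᵥ Z.mulVec (lam (t + 1)))
    (T : ℕ) (lambar : Fin n → ℝ)
    (hbar : lambar = ((T + 1 : ℝ))⁻¹ • ∑ t ∈ Finset.range (T + 1), lam (t + 1))
    (e : Fin m → ℝ) (he : e = (enorm' (Z.mulVec lambar))⁻¹ • Z.mulVec lambar) :
    (T + 1 : ℝ) * (Φ lambar - Φ lamstar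
        + 2 * enorm' omstar * enorm' (Z.mulVec lambar)) ≤
      wsq Nn ((2 * enorm' omstar) • e - om 0) + wsq Mm (lamstar - lam 0) := by
  have hpair : ((2 * enorm' omstar) • e) ⬝ᵥ Z *ᵥ lambar =
      2 * enorm' omstar * enorm' (Z *ᵥ lambar) := by
    rw [smul_dotProduct, he, inv_enorm'_smul_dotProduct_self, smul_eq_mul]
  simpa only [hpair] using card_mul_ergodic_gap_le hM hN hΦ
    (fun t => hiter t lamstar ((2 * enorm' omstar) • e)) hZstar hbar

/-- Summed ergodic bound for the CDPG analysis: from the per-iteration inequality,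
setting `λ = λ*` and `ω = 2‖ω*‖e` with `e = Zλ̄/‖Zλ̄‖`, summing and telescoping gives
`(T+1)(Φ(λ̄) − Φ(λ*) + 2‖ω*‖‖Zλ̄‖) ≤ ‖2‖ω*‖e − ω⁰‖²_N + ‖λ* − λ⁰‖²_M`. -/
theorem stmt_18 {n m : ℕ}
    (Mm : Matrix (Fin n) (Fin n) ℝ) (hM : Mm.PosSemidef)
    (Nn : Matrix (Fin m) (Fin m) ℝ) (hN : Nn.PosSemidef)
    (Φ : (Fin n → ℝ) → ℝ) (hΦ : ConvexOn ℝ univ Φ)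
    (Z : Matrix (Fin m) (Fin n) ℝ)
    (lam : ℕ → Fin n → ℝ) (om : ℕ → Fin m → ℝ)
    (lamstar : Fin n → ℝ) (omstar : Fin m → ℝ)
    (hZstar : Z.mulVec lamstar = 0)
    (hopt : ∀ l : Fin n → ℝ, 0 ≤ Φ l - Φ lamstar + omstar ⬝ᵥ Z.mulVec l)
    (hiter : ∀ (t : ℕ) (l : Fin n → ℝ) (w : Fin m → ℝ),
      Φ (lam (t + 1)) - Φ l ≤
        wsq Mm (l - lam t) - wsq Mm (l - lam (t + 1))
        + wsq Nn (w - om t) - wsq Nn (w - om (t + 1))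
        + om (t + 1) ⬝ᵥ Z.mulVec l - w ⬝ᵥ Z.mulVec (lam (t + 1)))
    (T : ℕ) (lambar : Fin n → ℝ)
    (hbar : lambar = ((T + 1 : ℝ))⁻¹ • ∑ t ∈ Finset.range (T + 1), lam (t + 1))
    (hne : Z.mulVec lambar ≠ 0)
    (e : Fin m → ℝ) (he : e = (enorm' (Z.mulVec lambar))⁻¹ • Z.mulVec lambar) :
    (T + 1 : ℝ) * (Φ lambar - Φ lamstar
        + 2 * enorm' omstar * enorm' (Z.mulVec lambar)) ≤
      wsq Nn ((2 * enorm' omstar) • e - om 0) + wsq Mm (lamstar - lam 0) :=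
  stmt_18_general Mm hM Nn hN Φ hΦ Z lam om lamstar omstar hZstar hiter T lambar hbar e he
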